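/- arXiv:2004.04028 — 13 statements merged into one kernel-verified Lean document; each statement's English description precedes it below -/
import Mathlib

section
/- A map s: S × S → S × S defined by s(x,y) = (x·y, θ_x(y)) is a set-theoretic solution of the Pentagon Equation s₂₃s₁₃s₁₂ = s₁₂s₂₃ if and only if for all x,y,z ∈ S: (x·y)·z = x·(y·z), θ_x(y)·θ_{x·y}(z) = θ_x(y·z), and θ_{θ_x(y)} ∘ θ_{x·y} = θ_y. -/
def pentMap12 {S : Type*} (s : S × S → S × S) : S × S × S → S × S × S :=
  fun p => ((s (p.1, p.2.1)).1, (s (p.1, p.2.1)).2, p.2.2)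

def pentMap23 {S : Type*} (s : S × S → S × S) : S × S × S → S × S × S :=
  fun p => (p.1, s (p.2.1, p.2.2))

def pentMap13 {S : Type*} (s : S × S → S × S) : S × S × S → S × S × S :=
  fun p => ((s (p.1, p.2.2)).1, p.2.1, (s (p.1, p.2.2)).2)

/-- `s` is a set-theoretic solution of the Pentagon Equation: s₂₃ s₁₃ s₁₂ = s₁₂ s₂₃. -/
def IsPentagonSolution {S : Type*} (s : S × S → S × S) : Prop :=
  pentMap23 s ∘ pentMap13 s ∘ pentMap12 s = pentMap12 s ∘ pentMap23 s

/-- The map t = τ s τ. -/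
def flipConj {S : Type*} (s : S × S → S × S) : S × S → S × S :=
  fun p => Prod.swap (s (p.2, p.1))

/-- `s` is a solution of the Reversed Pentagon Equation: for t = τsτ, t₁₂ t₁₃ t₂₃ = t₂₃ t₁₂. -/
def IsRPESolution {S : Type*} (s : S × S → S × S) : Prop :=
  pentMap12 (flipConj s) ∘ pentMap13 (flipConj s) ∘ pentMap23 (flipConj s) =
    pentMap23 (flipConj s) ∘ pentMap12 (flipConj s)

section

variable {S : Type*} {mul θ : S → S → S} {s : S × S → S × S}

theorem isPentagonSolution_iff_forall :
    IsPentagonSolution s ↔ ∀ x y z : S,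
      pentMap23 s (pentMap13 s (pentMap12 s (x, y, z))) = pentMap12 s (pentMap23 s (x, y, z)) := by
  simp only [IsPentagonSolution, funext_iff, Prod.forall, Function.comp_apply]

theorem pentMap23_pentMap13_pentMap12_apply (hs : ∀ x y, s (x, y) = (mul x y, θ x y)) (x y z : S) :
    pentMap23 s (pentMap13 s (pentMap12 s (x, y, z))) =
      (mul (mul x y) z, mul (θ x y) (θ (mul x y) z), θ (θ x y) (θ (mul x y) z)) := by
  simp only [pentMap12, pentMap13, pentMap23, hs]

theorem pentMap12_pentMap23_apply (hs : ∀ x y, s (x, y) = (mul x y, θ x y)) (x y z : S) :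
    pentMap12 s (pentMap23 s (x, y, z)) = (mul x (mul y z), θ x (mul y z), θ y z) := by
  simp only [pentMap12, pentMap23, hs]

end

theorem pentagon_iff_conditions_general {S : Type*} (mul θ : S → S → S)
    (s : S × S → S × S) (hs : ∀ x y, s (x, y) = (mul x y, θ x y)) :
    IsPentagonSolution s ↔
      ((∀ x y z, mul (mul x y) z = mul x (mul y z)) ∧
        (∀ x y z, mul (θ x y) (θ (mul x y) z) = θ x (mul y z)) ∧
        (∀ x y z, θ (θ x y) (θ (mul x y) z) = θ y z)) := by
  simp only [isPentagonSolution_iff_forall, pentMap23_pentMap13_pentMap12_apply hs,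
    pentMap12_pentMap23_apply hs, Prod.mk.injEq, forall_and]

theorem pentagon_iff_conditions {S : Type*} [Nonempty S] (mul θ : S → S → S)
    (s : S × S → S × S) (hs : ∀ x y, s (x, y) = (mul x y, θ x y)) :
    IsPentagonSolution s ↔
      ((∀ x y z, mul (mul x y) z = mul x (mul y z)) ∧
        (∀ x y z, mul (θ x y) (θ (mul x y) z) = θ x (mul y z)) ∧
        (∀ x y z, θ (θ x y) (θ (mul x y) z) = θ y z)) :=
  pentagon_iff_conditions_general mul θ s hs
end

section
/- If (S,s) is a bijective set-theoretic solution of the Pentagon Equation, then S = SS (every element of S is a product of two elements) with respect to the multiplication x·y given by the first component of s(x,y). -/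
theorem bijective_pentagon_S_eq_SS_general {S : Type*} (mul θ : S → S → S)
    (s : S × S → S × S) (hs : ∀ x y, s (x, y) = (mul x y, θ x y))
    (hbij : Function.Bijective s) :
    ∀ x : S, ∃ u v : S, x = mul u v := by
  intro x
  obtain ⟨⟨u, v⟩, huv⟩ := hbij.surjective (x, x)
  exact ⟨u, v, (congrArg Prod.fst ((hs u v).symm.trans huv)).symm⟩

theorem bijective_pentagon_S_eq_SS {S : Type*} (mul θ : S → S → S)
    (s : S × S → S × S) (hs : ∀ x y, s (x, y) = (mul x y, θ x y))
    (hassoc : ∀ x y z, mul (mul x y) z = mul x (mul y z))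
    (hPE : IsPentagonSolution s) (hbij : Function.Bijective s) :
    ∀ x : S, ∃ u v : S, x = mul u v :=
  bijective_pentagon_S_eq_SS_general mul θ s hs hbij
end

section
/- If (S,s) is a bijective set-theoretic solution of the Pentagon Equation, then the set T = {θ_x : x ∈ S} is closed under composition, i.e., T is a subsemigroup of the monoid of maps S → S. Specifically, θ_y ∘ θ_x = θ_v whenever s(u,v) = (x,y). -/
namespace IsPentagonSolution

variable {S : Type*} {mul θ : S → S → S} {s : S × S → S × S}

theorem theta_theta_comp_theta_mul (hs : ∀ x y, s (x, y) = (mul x y, θ x y))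
    (hPE : IsPentagonSolution s) (x y : S) : θ (θ x y) ∘ θ (mul x y) = θ y := by
  funext z
  have h := congrFun hPE (x, y, z)
  simp only [pentMap12, pentMap13, pentMap23, Function.comp_apply, hs, Prod.mk.injEq] at h
  exact h.2.2

theorem theta_comp_theta_of_eq (hs : ∀ x y, s (x, y) = (mul x y, θ x y))
    (hPE : IsPentagonSolution s) {u v x y : S} (h : s (u, v) = (x, y)) : θ y ∘ θ x = θ v := by
  obtain ⟨rfl, rfl⟩ := Prod.mk.inj ((hs u v).symm.trans h)
  exact hPE.theta_theta_comp_theta_mul hs u v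

end IsPentagonSolution

theorem bijective_pentagon_theta_closed {S : Type*} (mul θ : S → S → S)
    (s : S × S → S × S) (hs : ∀ x y, s (x, y) = (mul x y, θ x y))
    (hPE : IsPentagonSolution s) (hbij : Function.Bijective s) :
    (∀ u v x y : S, s (u, v) = (x, y) → θ y ∘ θ x = θ v) ∧
      (∀ x y : S, ∃ z : S, θ y ∘ θ x = θ z) := by
  refine ⟨fun u v x y h => hPE.theta_comp_theta_of_eq hs h, fun x y => ?_⟩
  obtain ⟨⟨u, v⟩, huv⟩ := hbij.surjective (x, y)
  exact ⟨v, hPE.theta_comp_theta_of_eq hs huv⟩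
end

section
/- If (S,s) is a set-theoretic solution of the Pentagon Equation and s is bijective of finite order (sⁿ = id for some n ≥ 1), then the semigroup (S,·) is simple, i.e., every two-sided ideal of S equals S. In particular x ∈ SyS for all x,y ∈ S. -/
/-!
The first component of the Pentagon Equation says that `x · y = (s (x, y)).1` is associative.
Iterating `s` from `(x, y)`, each first component is the product of the two components of the
previous pair, so from the second step on it lies in `(x · y) S`. Since `s^[2n] = id` with
`2n ≥ 2`, the first component returns to `x`, whence `x ∈ (x · y) S ⊆ S y S`.
-/

section PentagonSemigroup

variable {S : Type*} {mul : S → S → S} {s : S × S → S × S}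

theorem mul_assoc_of_isPentagonSolution (hmul : ∀ x y, (s (x, y)).1 = mul x y)
    (hPE : IsPentagonSolution s) (x y z : S) : mul (mul x y) z = mul x (mul y z) := by
  have h := congrArg Prod.fst (congrFun hPE (x, y, z))
  simpa only [Function.comp_apply, pentMap12, pentMap13, pentMap23, hmul] using h

theorem fst_iterate_succ (hmul : ∀ x y, (s (x, y)).1 = mul x y) (k : ℕ) (p : S × S) :
    (s^[k + 1] p).1 = mul (s^[k] p).1 (s^[k] p).2 := by
  rw [Function.iterate_succ_apply', ← hmul]

theorem exists_fst_iterate_add_two_eq_mul (hmul : ∀ x y, (s (x, y)).1 = mul x y)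
    (hPE : IsPentagonSolution s) (x y : S) (k : ℕ) :
    ∃ v, (s^[k + 2] (x, y)).1 = mul (mul x y) v := by
  induction k with
  | zero => exact ⟨(s (x, y)).2, by rw [fst_iterate_succ hmul, Function.iterate_one, hmul]⟩
  | succ k ih =>
    obtain ⟨v, hv⟩ := ih
    refine ⟨mul v (s^[k + 2] (x, y)).2, ?_⟩
    rw [fst_iterate_succ hmul, hv, mul_assoc_of_isPentagonSolution hmul hPE]

theorem exists_eq_mul_mul_of_iterate_eq_id (hmul : ∀ x y, (s (x, y)).1 = mul x y)
    (hPE : IsPentagonSolution s) {n : ℕ} (hn : 1 ≤ n) (hsn : s^[n] = id) (x y : S) :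
    ∃ u v, x = mul (mul u y) v := by
  have hs2n : s^[(2 * n - 2) + 2] = id := by
    rw [Nat.sub_add_cancel (by omega), mul_comm, Function.iterate_mul, hsn, Function.iterate_id]
  obtain ⟨v, hv⟩ := exists_fst_iterate_add_two_eq_mul hmul hPE x y (2 * n - 2)
  exact ⟨x, v, by rwa [hs2n] at hv⟩

end PentagonSemigroup

theorem eq_univ_of_forall_exists_eq_mul_mul {S : Type*} {mul : S → S → S}
    (hdiv : ∀ x y : S, ∃ u v, x = mul (mul u y) v) {I : Set S} (hne : I.Nonempty)
    (hI : ∀ a ∈ I, ∀ x : S, mul x a ∈ I ∧ mul a x ∈ I) : I = Set.univ := by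
  obtain ⟨a, ha⟩ := hne
  refine Set.eq_univ_of_forall fun x => ?_
  obtain ⟨u, v, rfl⟩ := hdiv x a
  exact (hI _ (hI a ha u).1 v).2

theorem finite_order_pentagon_simple {S : Type*} (mul θ : S → S → S)
    (s : S × S → S × S) (hs : ∀ x y, s (x, y) = (mul x y, θ x y))
    (hPE : IsPentagonSolution s)
    (hord : ∃ n : ℕ, 1 ≤ n ∧ s^[n] = id) :
    (∀ I : Set S, I.Nonempty → (∀ a ∈ I, ∀ x : S, mul x a ∈ I ∧ mul a x ∈ I) →
        I = Set.univ) ∧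
      (∀ x y : S, ∃ u v : S, x = mul (mul u y) v) := by
  obtain ⟨n, hn, hsn⟩ := hord
  have hmul : ∀ x y, (s (x, y)).1 = mul x y := fun x y => by rw [hs]
  have hdiv := exists_eq_mul_mul_of_iterate_eq_id hmul hPE hn hsn
  exact ⟨fun _ hne hI => eq_univ_of_forall_exists_eq_mul_mul hdiv hne hI, hdiv⟩
end

section
/- If (S,s) is a bijective solution of the Pentagon Equation on a left zero semigroup S (i.e., xy = x for all x,y ∈ S), then each map θ_x is bijective, and moreover each θ_x is either the identity or a fixed-point free permutation of S. -/
theorem theta_theta_of_isPentagonSolution {S : Type*} {θ : S → S → S} {s : S × S → S × S}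
    (hs : ∀ x y, s (x, y) = (x, θ x y)) (hPE : IsPentagonSolution s) (x y z : S) :
    θ (θ x y) (θ x z) = θ y z := by
  have h := congrArg (fun p : S × S × S => p.2.2) (congrFun hPE (x, y, z))
  simpa only [Function.comp, pentMap12, pentMap13, pentMap23, hs] using h

theorem bijective_theta_of_bijective {S : Type*} {θ : S → S → S} {s : S × S → S × S}
    (hs : ∀ x y, s (x, y) = (x, θ x y)) (hbij : Function.Bijective s) (x : S) :
    Function.Bijective (θ x) := by
  refine ⟨fun a b hab => ?_, fun z => ?_⟩
  · have h : s (x, a) = s (x, b) := by rw [hs, hs, hab]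
    exact (Prod.ext_iff.mp (hbij.1 h)).2
  · obtain ⟨⟨u, v⟩, huv⟩ := hbij.2 (x, z)
    rw [hs, Prod.mk.injEq] at huv
    obtain ⟨rfl, hv⟩ := huv
    exact ⟨v, hv⟩

theorem eq_id_of_isFixedPt {S : Type*} {θ : S → S → S}
    (hθ : ∀ x y z, θ (θ x y) (θ x z) = θ y z) {x y : S}
    (hinj : Function.Injective (θ y)) (hy : Function.IsFixedPt (θ x) y) : θ x = id := by
  funext z
  apply hinj
  simpa only [hy.eq, id_eq] using hθ x y z

theorem left_zero_pentagon_theta_bijective {S : Type*} (θ : S → S → S)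
    (s : S × S → S × S) (hs : ∀ x y, s (x, y) = (x, θ x y))
    (hPE : IsPentagonSolution s) (hbij : Function.Bijective s) :
    ∀ x : S, Function.Bijective (θ x) ∧ (θ x = id ∨ ∀ y : S, θ x y ≠ y) := by
  have hθ := theta_theta_of_isPentagonSolution hs hPE
  intro x
  refine ⟨bijective_theta_of_bijective hs hbij x, ?_⟩
  by_cases hfix : ∃ y, θ x y = y
  · obtain ⟨y, hy⟩ := hfix
    exact Or.inl (eq_id_of_isFixedPt hθ (bijective_theta_of_bijective hs hbij y).1 hy)
  · exact Or.inr fun y hy => hfix ⟨y, hy⟩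
end

section
/- If G is a group and (G,s) is a bijective set-theoretic solution of the Pentagon Equation, then s(x,y) = (xy, y) for all x,y ∈ G. In particular, the bijective solution of the Pentagon Equation on a group is unique. -/
section Pentagon

variable {G : Type*} {θ : G → G → G}

theorem IsPentagonSolution.theta_identities [Mul G] {s : G × G → G × G}
    (hs : ∀ x y, s (x, y) = (x * y, θ x y)) (hPE : IsPentagonSolution s) (x y z : G) :
    θ x y * θ (x * y) z = θ x (y * z) ∧ θ (θ x y) (θ (x * y) z) = θ y z := by
  have h := congrFun hPE (x, y, z)
  simp only [Function.comp, pentMap12, pentMap13, pentMap23, hs, Prod.mk.injEq] at h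
  exact h.2

variable [Group G] (h₁ : ∀ x y z, θ x y * θ (x * y) z = θ x (y * z))
include h₁

theorem theta_one_right (x : G) : θ x 1 = 1 := by
  have h := h₁ x 1 1
  rw [mul_one, one_mul] at h
  exact mul_eq_left.mp h

theorem theta_one_theta (h₂ : ∀ x y z, θ (θ x y) (θ (x * y) z) = θ y z) (x y : G) :
    θ 1 (θ x y) = θ 1 y := by
  simpa only [theta_one_right h₁, mul_one] using h₂ x 1 y

theorem theta_inv_right (y : G) : θ y y⁻¹ = (θ 1 y)⁻¹ := by
  have h := h₁ 1 y y⁻¹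
  rw [one_mul, mul_inv_cancel, theta_one_right h₁] at h
  exact eq_inv_of_mul_eq_one_right h

theorem injective_theta_one {s : G × G → G × G} (hs : ∀ x y, s (x, y) = (x * y, θ x y))
    (hinj : Function.Injective s) : Function.Injective (θ 1) := by
  intro u v huv
  have hsuv : s (u, u⁻¹) = s (v, v⁻¹) := by
    rw [hs, hs, theta_inv_right h₁, theta_inv_right h₁, huv, mul_inv_cancel, mul_inv_cancel]
  exact (Prod.mk.inj (hinj hsuv)).1

end Pentagon

theorem group_pentagon_unique {G : Type*} [Group G] (θ : G → G → G)
    (s : G × G → G × G) (hs : ∀ x y, s (x, y) = (x * y, θ x y))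
    (hPE : IsPentagonSolution s) (hbij : Function.Bijective s) :
    ∀ x y : G, s (x, y) = (x * y, y) := by
  have h₁ x y z := (hPE.theta_identities hs x y z).1
  have h₂ x y z := (hPE.theta_identities hs x y z).2
  intro x y
  rw [hs, injective_theta_one h₁ hs hbij.1 (theta_one_theta h₁ h₂ x y)]
end

section
/- Let (S,s) be an involutive solution of the Pentagon Equation. Then θ_{θ_x(y)} = θ_x ∘ θ_y, θ_x² = id, and θ_{xy} = θ_x for all x,y ∈ S. -/
/-! Since s₁₂, s₁₃ and s₂₃ are involutions, inverting both sides of s₂₃ s₁₃ s₁₂ = s₁₂ s₂₃ gives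
s₁₂ s₁₃ s₂₃ = s₂₃ s₁₂, whose third component is θ_x ∘ θ_y = θ_{θ_x(y)}. Together with
θ_{θ_x(y)} ∘ θ_{xy} = θ_y and θ_{xy}(θ_x(y)) = y this makes every θ_x surjective and θ_{xy} a left
inverse of θ_x. Then θ_{(xx)x} = θ_x, while θ_{x(xx)} is a left inverse of θ_x, so associativity
forces θ_x² = id, and θ_{xy} = θ_x follows. -/

theorem Function.Involutive.comp_comp_eq_of_comp_comp_eq {α : Type*} {a b c : α → α}
    (ha : Function.Involutive a) (hb : Function.Involutive b) (hc : Function.Involutive c)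
    (h : c ∘ b ∘ a = a ∘ c) : a ∘ b ∘ c = c ∘ a := by
  funext p
  have key : a (c (a (b (c p)))) = p := by
    have := congrFun h (a (b (c p)))
    simp only [Function.comp_apply, ha _, hb _, hc _] at this
    exact this.symm
  simpa only [Function.comp_apply, ha _, hc _] using congrArg (c ∘ a) key

section PentagonLegs

variable {S : Type*} {s : S × S → S × S}

theorem pentMap12_involutive (h : Function.Involutive s) : Function.Involutive (pentMap12 s) := by
  rintro ⟨x, y, z⟩
  simp [pentMap12, h _]

theorem pentMap13_involutive (h : Function.Involutive s) : Function.Involutive (pentMap13 s) := by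
  rintro ⟨x, y, z⟩
  simp [pentMap13, h _]

theorem pentMap23_involutive (h : Function.Involutive s) : Function.Involutive (pentMap23 s) := by
  rintro ⟨x, y, z⟩
  simp [pentMap23, h _]

theorem IsPentagonSolution.reversed (hPE : IsPentagonSolution s) (h : Function.Involutive s) :
    pentMap12 s ∘ pentMap13 s ∘ pentMap23 s = pentMap23 s ∘ pentMap12 s :=
  (pentMap12_involutive h).comp_comp_eq_of_comp_comp_eq (pentMap13_involutive h)
    (pentMap23_involutive h) hPE

variable {mul θ : S → S → S}

theorem IsPentagonSolution.apply (hs : ∀ x y, s (x, y) = (mul x y, θ x y))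
    (hPE : IsPentagonSolution s) (x y z : S) :
    (mul (mul x y) z, mul (θ x y) (θ (mul x y) z), θ (θ x y) (θ (mul x y) z)) =
      (mul x (mul y z), θ x (mul y z), θ y z) := by
  simpa [pentMap12, pentMap13, pentMap23, hs] using congrFun hPE (x, y, z)

theorem theta_theta_of_reversed (hs : ∀ x y, s (x, y) = (mul x y, θ x y))
    (hRPE : pentMap12 s ∘ pentMap13 s ∘ pentMap23 s = pentMap23 s ∘ pentMap12 s) (x y z : S) :
    θ x (θ y z) = θ (θ x y) z := by
  simpa [pentMap12, pentMap13, pentMap23, hs] using congrArg (·.2.2) (congrFun hRPE (x, y, z))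

theorem theta_mul_theta_of_involutive (hs : ∀ x y, s (x, y) = (mul x y, θ x y))
    (h : Function.Involutive s) (x y : S) :
    θ (mul x y) (θ x y) = y := by
  simpa [hs] using congrArg Prod.snd (h (x, y))

end PentagonLegs

section ThetaIdentities

variable {S : Type*} {mul θ : S → S → S}
  (hθθ : ∀ x y z, θ x (θ y z) = θ (θ x y) z)
  (hθθmul : ∀ x y z, θ (θ x y) (θ (mul x y) z) = θ y z)
  (hθmul : ∀ x y, θ (mul x y) (θ x y) = y)

include hθθ hθθmul hθmul in
/-- The witness comes from `w = θ_{xw}(θ_x w)` and `θ_x ∘ θ_{xw} ∘ θ_{x(xw)} = θ_{xw}`. -/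
theorem theta_surjective (x : S) : Function.Surjective (θ x) := fun w =>
  ⟨θ (mul x w) (θ (mul x (mul x w)) (θ x w)), by rw [hθθ, hθθmul, hθmul]⟩

include hθθ hθθmul hθmul in
theorem theta_mul_leftInverse (x y : S) : Function.LeftInverse (θ (mul x y)) (θ x) := by
  intro w
  obtain ⟨v, rfl⟩ := theta_surjective hθθ hθθmul hθmul y w
  rw [hθθ x y v, hθθ (mul x y) (θ x y) v, hθmul]

include hθθ hθθmul hθmul in
theorem theta_involutive (hassoc : ∀ x y z, mul (mul x y) z = mul x (mul y z)) (x : S) :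
    Function.Involutive (θ x) := by
  have hleft := theta_mul_leftInverse hθθ hθθmul hθmul
  have hcube : θ (mul (mul x x) x) = θ x := funext fun w =>
    (congrArg _ (hleft x x w)).symm.trans (hleft (mul x x) x (θ x w))
  intro w
  rw [← congrFun hcube, hassoc, hleft]

include hθθ hθθmul hθmul in
theorem theta_mul (hassoc : ∀ x y z, mul (mul x y) z = mul x (mul y z)) (x y : S) :
    θ (mul x y) = θ x := funext fun w => by
  rw [← theta_involutive hθθ hθθmul hθmul hassoc x w, theta_mul_leftInverse hθθ hθθmul hθmul,
    theta_involutive hθθ hθθmul hθmul hassoc]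

end ThetaIdentities

theorem involutive_pentagon_theta_props {S : Type*} (mul θ : S → S → S)
    (s : S × S → S × S) (hs : ∀ x y, s (x, y) = (mul x y, θ x y))
    (hPE : IsPentagonSolution s) (hinv : s ∘ s = id) :
    ∀ x y : S, θ (θ x y) = θ x ∘ θ y ∧ θ x ∘ θ x = id ∧ θ (mul x y) = θ x := by
  have hs_inv : Function.Involutive s := congrFun hinv
  have hθθ := theta_theta_of_reversed hs (hPE.reversed hs_inv)
  have hθθmul x y z := congrArg (·.2.2) (hPE.apply hs x y z)
  have hassoc x y z := congrArg Prod.fst (hPE.apply hs x y z)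
  have hθmul := theta_mul_theta_of_involutive hs hs_inv
  intro x y
  exact ⟨funext fun z => (hθθ x y z).symm,
    (theta_involutive hθθ hθθmul hθmul hassoc x).comp_self,
    theta_mul hθθ hθθmul hθmul hassoc x y⟩
end

section
/- Let (S,s) be an involutive solution of the Pentagon Equation. Then (S,s) is commutative, i.e., s₁₂s₁₃ = s₁₃s₁₂; equivalently, xyz = xzy and θ_{xy} = θ_x for all x,y,z ∈ S. -/
open Function

namespace Function.Involutive

variable {α : Type*} {f g : α → α}

theorem comp_comm (hf : Involutive f) (hg : Involutive g) (hfg : Involutive (f ∘ g)) :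
    f ∘ g = g ∘ f :=
  funext fun x =>
    calc f (g x) = (f ∘ g) ((f ∘ g) (g (f x))) := by simp only [comp_apply, hg (f x), hf x]
      _ = g (f x) := hfg _

theorem conj (hf : Involutive f) (hg : Involutive g) : Involutive (g ∘ f ∘ g) :=
  fun x => by simp only [comp_apply, hg (f (g x)), hf (g x), hg x]

end Function.Involutive

section Pentagon

variable {S : Type*} {s : S × S → S × S}

theorem involutive_pentMap12 (hs : Involutive s) : Involutive (pentMap12 s) :=
  fun p => by simp [pentMap12, hs _]

theorem involutive_pentMap13 (hs : Involutive s) : Involutive (pentMap13 s) :=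
  fun p => by simp [pentMap13, hs _]

theorem involutive_pentMap23 (hs : Involutive s) : Involutive (pentMap23 s) :=
  fun p => by simp [pentMap23, hs _]

theorem IsPentagonSolution.pentMap13_comp_pentMap12 (hPE : IsPentagonSolution s)
    (hs : Involutive s) :
    pentMap13 s ∘ pentMap12 s = pentMap23 s ∘ pentMap12 s ∘ pentMap23 s :=
  funext fun p => (involutive_pentMap23 hs).eq_iff.mp (congrFun hPE p)

theorem IsPentagonSolution.pentMap12_comp_pentMap13 (hPE : IsPentagonSolution s)
    (hs : Involutive s) :
    pentMap12 s ∘ pentMap13 s = pentMap13 s ∘ pentMap12 s := by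
  have h1312 : Involutive (pentMap13 s ∘ pentMap12 s) := by
    rw [hPE.pentMap13_comp_pentMap12 hs]
    exact (involutive_pentMap12 hs).conj (involutive_pentMap23 hs)
  exact ((involutive_pentMap13 hs).comp_comm (involutive_pentMap12 hs) h1312).symm

theorem pentMap12_comp_pentMap13_eq_iff {mul θ : S → S → S}
    (hs : ∀ x y, s (x, y) = (mul x y, θ x y)) :
    pentMap12 s ∘ pentMap13 s = pentMap13 s ∘ pentMap12 s ↔
      (∀ x y z, mul (mul x y) z = mul (mul x z) y) ∧ ∀ x y, θ (mul x y) = θ x := by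
  simp only [funext_iff, Prod.forall, comp_apply, pentMap12, pentMap13, hs, Prod.mk.injEq]
  constructor
  · intro h
    exact ⟨fun x y z => (h x y z).1.symm, fun x y z => (h x z y).2.1⟩
  · rintro ⟨hmul, hθ⟩ x y z
    exact ⟨(hmul x y z).symm, hθ x z y, (hθ x y z).symm⟩

end Pentagon

theorem involutive_pentagon_commutative {S : Type*} (mul θ : S → S → S)
    (s : S × S → S × S) (hs : ∀ x y, s (x, y) = (mul x y, θ x y))
    (hPE : IsPentagonSolution s) (hinv : s ∘ s = id) :
    pentMap12 s ∘ pentMap13 s = pentMap13 s ∘ pentMap12 s ∧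
      (∀ x y z : S, mul (mul x y) z = mul (mul x z) y) ∧
      (∀ x y : S, θ (mul x y) = θ x) := by
  have hcomm := hPE.pentMap12_comp_pentMap13 (congrFun hinv)
  exact ⟨hcomm, (pentMap12_comp_pentMap13_eq_iff hs).mp hcomm⟩
end

section
/- Let (S,s) be an involutive solution of the Pentagon Equation. Then its retract Ret(S,s) is irretractable: for the induced solution (S̄,s̄), the maps θ̄_x̄ = θ̄_ȳ imply x̄ = ȳ. -/
/-! Writing `s (x, y) = (x * y, θ_x y)`, involutivity and the pentagon laws give
`x * θ_y z = x * z` and `θ_x θ_y = θ_{θ_y x}`. Hence if `θ_{θ_x z} = θ_{θ_y z}` for all `z`,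
then `s (x, θ_x w) = s (x, θ_y w)`, and `θ_x w = θ_y w` because `s` is injective. -/

section InvolutivePentagon

variable {S : Type*}

theorem isPentagonSolution_iff {mul θ : S → S → S} {s : S × S → S × S}
    (hs : ∀ x y, s (x, y) = (mul x y, θ x y)) :
    IsPentagonSolution s ↔ ∀ x y z,
      mul (mul x y) z = mul x (mul y z) ∧ mul (θ x y) (θ (mul x y) z) = θ x (mul y z) ∧
        θ (θ x y) (θ (mul x y) z) = θ y z := by
  simp only [IsPentagonSolution, funext_iff, Prod.forall, Function.comp_apply, pentMap12,
    pentMap13, pentMap23, hs, Prod.mk.injEq]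

theorem comp_self_eq_id_iff {mul θ : S → S → S} {s : S × S → S × S}
    (hs : ∀ x y, s (x, y) = (mul x y, θ x y)) :
    s ∘ s = id ↔ ∀ x y, mul (mul x y) (θ x y) = x ∧ θ (mul x y) (θ x y) = y := by
  simp only [funext_iff, Prod.forall, Function.comp_apply, id_eq, hs, Prod.mk.injEq]

/-- The laws of an involutive solution `s (x, y) = (x * y, θ x y)` of the Pentagon Equation,
read off componentwise. -/
structure IsInvolutivePentagon (mul θ : S → S → S) : Prop where
  mul_assoc : ∀ x y z, mul (mul x y) z = mul x (mul y z)
  mul_theta_theta_mul : ∀ x y z, mul (θ x y) (θ (mul x y) z) = θ x (mul y z)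
  theta_theta_theta_mul : ∀ x y z, θ (θ x y) (θ (mul x y) z) = θ y z
  mul_mul_theta : ∀ x y, mul (mul x y) (θ x y) = x
  theta_mul_theta : ∀ x y, θ (mul x y) (θ x y) = y

namespace IsInvolutivePentagon

variable {mul θ : S → S → S}

theorem of_solution {s : S × S → S × S} (hs : ∀ x y, s (x, y) = (mul x y, θ x y))
    (hPE : IsPentagonSolution s) (hinv : s ∘ s = id) : IsInvolutivePentagon mul θ where
  mul_assoc x y z := ((isPentagonSolution_iff hs).1 hPE x y z).1
  mul_theta_theta_mul x y z := ((isPentagonSolution_iff hs).1 hPE x y z).2.1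
  theta_theta_theta_mul x y z := ((isPentagonSolution_iff hs).1 hPE x y z).2.2
  mul_mul_theta x y := ((comp_self_eq_id_iff hs).1 hinv x y).1
  theta_mul_theta x y := ((comp_self_eq_id_iff hs).1 hinv x y).2

theorem eq_of_mul_eq_of_theta_eq (h : IsInvolutivePentagon mul θ) {x a b : S}
    (hmul : mul x a = mul x b) (hθ : θ x a = θ x b) : a = b := by
  rw [← h.theta_mul_theta x a, hmul, hθ, h.theta_mul_theta]

theorem theta_mul (h : IsInvolutivePentagon mul θ) (u x y : S) :
    θ u (mul x y) = mul (θ u x) y := by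
  have hmul := h.mul_theta_theta_mul u (mul x y) (θ x y)
  have hθ := h.theta_theta_theta_mul u (mul x y) (θ x y)
  rw [h.mul_mul_theta] at hmul
  rw [h.theta_mul_theta] at hθ
  calc θ u (mul x y)
      = mul (mul (θ u (mul x y)) (θ (mul u (mul x y)) (θ x y)))
          (θ (θ u (mul x y)) (θ (mul u (mul x y)) (θ x y))) := (h.mul_mul_theta _ _).symm
    _ = mul (θ u x) y := by rw [hmul, hθ]

theorem mul_theta (h : IsInvolutivePentagon mul θ) (a b c : S) : mul a (θ b c) = mul a c := by
  have := h.mul_theta_theta_mul (mul b a) (θ b a) c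
  rwa [h.mul_mul_theta, h.theta_mul_theta, h.theta_mul, h.theta_mul_theta] at this

theorem theta_theta (h : IsInvolutivePentagon mul θ) (x y z : S) :
    θ x (θ y z) = θ (θ y x) z := by
  have := h.theta_theta_theta_mul (mul y x) (θ y x) z
  rwa [h.mul_mul_theta, h.theta_mul_theta] at this

theorem theta_eq_of_theta_theta_eq (h : IsInvolutivePentagon mul θ) {x y : S}
    (H : ∀ z, θ (θ x z) = θ (θ y z)) : θ x = θ y := by
  funext w
  refine h.eq_of_mul_eq_of_theta_eq (x := x) ?_ ?_
  · rw [h.mul_theta, h.mul_theta]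
  · rw [h.theta_theta, h.theta_theta, H]

end IsInvolutivePentagon

end InvolutivePentagon

theorem retract_irretractable {S : Type*} (mul θ : S → S → S)
    (s : S × S → S × S) (hs : ∀ x y, s (x, y) = (mul x y, θ x y))
    (hPE : IsPentagonSolution s) (hinv : s ∘ s = id) :
    ∀ x y : S, (∀ z : S, θ (θ x z) = θ (θ y z)) → θ x = θ y :=
  fun _ _ => (IsInvolutivePentagon.of_solution hs hPE hinv).theta_eq_of_theta_theta_eq
end

section
/- Let (A,+) be an elementary abelian 2-group (every element satisfies a + a = 0 and + is commutative). Then the map t: A × A → A × A defined by t(x,y) = (x, x+y) is an irretractable involutive solution of the Pentagon Equation, where A carries the left zero multiplication x·y = x. -/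
/-! The map is a shear `(x, y) ↦ (x, x + y)`. Both the pentagon identity and `t ∘ t = id` reduce,
coordinatewise, to the cancellation `x + x = 0`, i.e. to `A` having exponent 2; irretractability
holds because `θ_x = (x + ·)` recovers `x` as `θ_x 0`. -/

section Shear

variable (A : Type*)

def shear [Add A] : A × A → A × A := fun p => (p.1, p.1 + p.2)

theorem isPentagonSolution_shear_iff [AddCommMonoid A] :
    IsPentagonSolution (shear A) ↔ ∀ a : A, a + a = 0 := by
  constructor
  · intro h a
    simpa [pentMap12, pentMap13, pentMap23, shear] using congrFun h (a, 0, 0)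
  · intro h
    funext ⟨x, y, z⟩
    simp only [Function.comp_apply, pentMap12, pentMap13, pentMap23, shear]
    rw [show x + y + (x + z) = (x + x) + (y + z) by abel, h, zero_add]

theorem shear_comp_shear_eq_id_iff [AddMonoid A] :
    shear A ∘ shear A = id ↔ ∀ a : A, a + a = 0 := by
  constructor
  · intro h a
    simpa [shear] using congrFun h (a, 0)
  · intro h
    funext ⟨x, y⟩
    simp only [Function.comp_apply, shear, id, ← add_assoc, h, zero_add]

end Shear

theorem add_left_fun_injective {A : Type*} [AddZeroClass A] :
    Function.Injective fun x : A => (x + ·) := fun x y h => by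
  simpa using congrFun h 0

theorem elementary_abelian_irretractable_solution {A : Type*} [AddCommGroup A]
    (h2 : ∀ a : A, a + a = 0)
    (t : A × A → A × A) (ht : ∀ x y : A, t (x, y) = (x, x + y)) :
    IsPentagonSolution t ∧ t ∘ t = id ∧
      (∀ x y : A, (fun z => x + z) = (fun z => y + z) → x = y) := by
  obtain rfl : t = shear A := funext fun ⟨x, y⟩ => ht x y
  exact ⟨(isPentagonSolution_shear_iff A).2 h2, (shear_comp_shear_eq_id_iff A).2 h2,
    fun _ _ h => add_left_fun_injective h⟩
end

section
/- Let (S,s) be an irretractable involutive solution of the Pentagon Equation. Then the operation x + y := θ_x(y) makes S into an elementary abelian 2-group (associative, commutative, with identity 0 = θ_a(a) for any a, and x + x = 0 for all x), and s(x,y) = (x, x+y). -/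
/-!
Write `s(x,y) = (xy, θ_x y)`. The components of the pentagon equation and of `s ∘ s = id` first
give `θ_{θ_x y} = θ_y θ_x`, `(xy)y = x` and that `θ_a` is onto; irretractability then makes every
`θ_a` injective, and `θ_{ay} ∘ θ_a = id` shows that `θ_{ay}` does not depend on `y`, so `xy = x`
by irretractability again. Now each `θ_x` is an involution, and so is `θ_{θ_x y} = θ_y θ_x`, so
the `θ_x` commute; irretractability turns these identities of maps into the group laws.
-/

/-- The components of the pentagon equation and of involutivity for `s (x, y) = (mul x y, θ x y)`. -/
structure InvolutivePentagonLaws {S : Type*} (mul θ : S → S → S) : Prop where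
  assoc : ∀ x y z, mul (mul x y) z = mul x (mul y z)
  mul_theta_theta_mul : ∀ x y z, mul (θ x y) (θ (mul x y) z) = θ x (mul y z)
  theta_theta_theta_mul : ∀ x y z, θ (θ x y) (θ (mul x y) z) = θ y z
  mul_mul_theta : ∀ x y, mul (mul x y) (θ x y) = x
  theta_mul_theta : ∀ x y, θ (mul x y) (θ x y) = y

namespace InvolutivePentagonLaws

variable {S : Type*} {mul θ : S → S → S}

theorem of_solution {s : S × S → S × S} (hs : ∀ x y, s (x, y) = (mul x y, θ x y))
    (hPE : IsPentagonSolution s) (hinv : s ∘ s = id) : InvolutivePentagonLaws mul θ := by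
  have pe (x y z : S) := congrFun hPE (x, y, z)
  have inv (x y : S) := congrFun hinv (x, y)
  simp only [Function.comp, pentMap12, pentMap23, pentMap13, hs, Prod.mk.injEq, id] at pe inv
  exact ⟨fun x y z => (pe x y z).1, fun x y z => (pe x y z).2.1, fun x y z => (pe x y z).2.2,
    fun x y => (inv x y).1, fun x y => (inv x y).2⟩

theorem theta_theta_eq_comp (h : InvolutivePentagonLaws mul θ) (x y : S) :
    θ (θ x y) = θ y ∘ θ x := by
  funext z
  have := h.theta_theta_theta_mul (mul x y) (θ x y) z
  rw [h.mul_mul_theta, h.theta_mul_theta] at this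
  exact this.symm

theorem theta_mul (h : InvolutivePentagonLaws mul θ) (x a b : S) :
    θ x (mul a b) = mul (θ x a) b := by
  have key (y z : S) : mul (θ x (mul y z)) (θ y z) = θ x y := by
    have := h.mul_mul_theta (θ x y) (θ (mul x y) z)
    rwa [h.mul_theta_theta_mul, h.theta_theta_theta_mul] at this
  have := key (mul a b) (θ a b)
  rw [h.mul_mul_theta, h.theta_mul_theta] at this
  exact this.symm

theorem mul_theta (h : InvolutivePentagonLaws mul θ) (a w z : S) : mul a (θ w z) = mul a z := by
  have := h.mul_theta_theta_mul (mul w a) (θ w a) z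
  rwa [h.theta_mul, h.mul_mul_theta, h.theta_mul_theta] at this

theorem mul_mul_self_right (h : InvolutivePentagonLaws mul θ) (x y : S) : mul (mul x y) y = x := by
  simpa only [h.mul_theta] using h.mul_mul_theta x y

theorem theta_surjective (h : InvolutivePentagonLaws mul θ) (a : S) :
    Function.Surjective (θ a) := fun y =>
  ⟨θ (mul a y) y, by simpa only [h.mul_mul_self_right] using h.theta_mul_theta (mul a y) y⟩

theorem theta_injective (h : InvolutivePentagonLaws mul θ) (hirr : Function.Injective θ) (a : S) :
    Function.Injective (θ a) := fun u v huv =>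
  hirr <| (h.theta_surjective a).injective_comp_right <| by
    dsimp only
    rw [← h.theta_theta_eq_comp, ← h.theta_theta_eq_comp, huv]

theorem theta_comp_theta_mul (h : InvolutivePentagonLaws mul θ) (hirr : Function.Injective θ)
    (x y : S) : θ x ∘ θ (mul x y) = id := by
  funext z
  apply h.theta_injective hirr y
  rw [Function.comp_apply, ← Function.comp_apply (f := θ y), ← h.theta_theta_eq_comp,
    h.theta_theta_theta_mul, id]

theorem mul_eq_left (h : InvolutivePentagonLaws mul θ) (hirr : Function.Injective θ) (x y : S) :
    mul x y = x := by
  have theta_mul_comp (a y : S) : θ (mul a y) ∘ θ a = id := by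
    simpa only [h.mul_mul_self_right] using h.theta_comp_theta_mul hirr (mul a y) y
  -- `θ (mul x y)` is a left inverse of the bijection `θ x`, hence independent of `y`.
  have hconst (z : S) : mul x y = mul x z := hirr <|
    (h.theta_surjective x).injective_comp_right (by dsimp only; rw [theta_mul_comp, theta_mul_comp])
  calc mul x y = mul x (mul y y) := hconst _
    _ = mul (mul x y) y := (h.assoc x y y).symm
    _ = x := h.mul_mul_self_right x y

theorem theta_involutive (h : InvolutivePentagonLaws mul θ) (hirr : Function.Injective θ) (x : S) :
    Function.Involutive (θ x) := fun y => by
  simpa only [h.mul_eq_left hirr] using h.theta_mul_theta x y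

end InvolutivePentagonLaws

section InvolutionFamily

variable {S : Type*} {θ : S → S → S}

theorem comp_comm_of_theta_theta_eq_comp (hinvol : ∀ x, Function.Involutive (θ x))
    (hcomp : ∀ x y, θ (θ x y) = θ y ∘ θ x) (x y : S) : θ x ∘ θ y = θ y ∘ θ x := by
  have hsq : (θ y ∘ θ x) ∘ (θ y ∘ θ x) = id := by
    rw [← hcomp]
    exact (hinvol _).comp_self
  calc θ x ∘ θ y = θ x ∘ θ y ∘ ((θ y ∘ θ x) ∘ (θ y ∘ θ x)) := by rw [hsq, Function.comp_id]
    _ = θ y ∘ θ x := by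
      simp only [← Function.comp_assoc, (hinvol x).comp_self, (hinvol y).comp_self,
        Function.id_comp]

theorem theta_theta_assoc (hinvol : ∀ x, Function.Involutive (θ x))
    (hcomp : ∀ x y, θ (θ x y) = θ y ∘ θ x) (x y z : S) : θ (θ x y) z = θ x (θ y z) := by
  rw [hcomp, comp_comm_of_theta_theta_eq_comp hinvol hcomp, Function.comp_apply]

theorem theta_comm (hirr : Function.Injective θ) (hinvol : ∀ x, Function.Involutive (θ x))
    (hcomp : ∀ x y, θ (θ x y) = θ y ∘ θ x) (x y : S) : θ x y = θ y x :=
  hirr <| by rw [hcomp, hcomp, comp_comm_of_theta_theta_eq_comp hinvol hcomp]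

theorem theta_theta_self (hinvol : ∀ x, Function.Involutive (θ x))
    (hcomp : ∀ x y, θ (θ x y) = θ y ∘ θ x) (a : S) : θ (θ a a) = id := by
  rw [hcomp, (hinvol a).comp_self]

end InvolutionFamily

theorem irretractable_gives_elementary_abelian {S : Type*} (mul θ : S → S → S)
    (s : S × S → S × S) (hs : ∀ x y, s (x, y) = (mul x y, θ x y))
    (hPE : IsPentagonSolution s) (hinv : s ∘ s = id)
    (hirr : ∀ x y : S, θ x = θ y → x = y) :
    (∀ x y : S, mul x y = x) ∧
      (∀ x y z : S, θ (θ x y) z = θ x (θ y z)) ∧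
      (∀ x y : S, θ x y = θ y x) ∧
      (∀ a b : S, θ a a = θ b b) ∧
      (∀ a x : S, θ (θ a a) x = x ∧ θ x (θ a a) = x) ∧
      (∀ x y : S, s (x, y) = (x, θ x y)) := by
  have h := InvolutivePentagonLaws.of_solution hs hPE hinv
  have hmul := h.mul_eq_left hirr
  have hinvol := h.theta_involutive hirr
  have hcomp := h.theta_theta_eq_comp
  have hzero := theta_theta_self hinvol hcomp
  refine ⟨hmul, theta_theta_assoc hinvol hcomp, theta_comm hirr hinvol hcomp,
    fun a b => hirr _ _ (by rw [hzero, hzero]), fun a x => ⟨?_, ?_⟩, fun x y => by rw [hs, hmul]⟩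
  · rw [hzero, id]
  · rw [theta_comm hirr hinvol hcomp, hzero, id]
end

section
/- Let A be an elementary abelian 2-group, X a non-empty set, and σ: A → Sym(X) any function (not necessarily a homomorphism). Define S = X × A with multiplication (x,a)·(y,b) = (x,a) and s((x,a),(y,b)) = ((x,a), (σ_{a+b}σ_b⁻¹(y), a+b)). Then (S,s) is an involutive solution of the Pentagon Equation. -/
/-- The extension solution Ext_X^σ(A, t_A) on X × A. -/
def extSol {X A : Type*} [AddCommGroup A] (σ : A → Equiv.Perm X) :
    (X × A) × (X × A) → (X × A) × (X × A) :=
  fun p => (p.1, (σ (p.1.2 + p.2.2) ((σ p.2.2).symm p.2.1), p.1.2 + p.2.2))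

section LeftZero

variable {S : Type*}

theorem isPentagonSolution_fst_iff (θ : S → S → S) :
    IsPentagonSolution (fun p : S × S => (p.1, θ p.1 p.2)) ↔
      ∀ u v w, θ (θ u v) (θ u w) = θ v w := by
  simp only [IsPentagonSolution, funext_iff, pentMap12, pentMap13, pentMap23,
    Function.comp_apply, Prod.forall, Prod.mk.injEq, true_and]

theorem fst_comp_self_eq_id_iff (θ : S → S → S) :
    (fun p : S × S => (p.1, θ p.1 p.2)) ∘ (fun p : S × S => (p.1, θ p.1 p.2)) = id ↔
      ∀ u, Function.Involutive (θ u) := by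
  simp only [funext_iff, Function.comp_apply, id_eq, Prod.forall, Prod.mk.injEq, true_and,
    Function.Involutive]

end LeftZero

section Extension

variable {X A : Type*} [AddCommGroup A]

def extTheta (σ : A → Equiv.Perm X) (u v : X × A) : X × A :=
  (σ (u.2 + v.2) ((σ v.2).symm v.1), u.2 + v.2)

theorem extSol_eq (σ : A → Equiv.Perm X) :
    extSol σ = fun p => (p.1, extTheta σ p.1 p.2) :=
  rfl

variable (h2 : ∀ a : A, a + a = 0) (σ : A → Equiv.Perm X)
include h2

theorem extTheta_extTheta_extTheta (u v w : X × A) :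
    extTheta σ (extTheta σ u v) (extTheta σ u w) = extTheta σ v w := by
  have hsum : u.2 + v.2 + (u.2 + w.2) = v.2 + w.2 := by
    rw [add_add_add_comm, h2, zero_add]
  simp only [extTheta, hsum, Equiv.symm_apply_apply]

theorem extTheta_involutive (u : X × A) : Function.Involutive (extTheta σ u) := by
  intro v
  have hsum : u.2 + (u.2 + v.2) = v.2 := by
    rw [← add_assoc, h2, zero_add]
  simp only [extTheta, hsum, Equiv.symm_apply_apply, Equiv.apply_symm_apply]

end Extension

theorem extension_is_involutive_solution_general {X A : Type*} [AddCommGroup A]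
    (h2 : ∀ a : A, a + a = 0) (σ : A → Equiv.Perm X) :
    IsPentagonSolution (extSol σ) ∧ extSol σ ∘ extSol σ = id := by
  rw [extSol_eq, isPentagonSolution_fst_iff, fst_comp_self_eq_id_iff]
  exact ⟨extTheta_extTheta_extTheta h2 σ, extTheta_involutive h2 σ⟩

theorem extension_is_involutive_solution {X A : Type*} [Nonempty X] [AddCommGroup A]
    (h2 : ∀ a : A, a + a = 0) (σ : A → Equiv.Perm X) :
    IsPentagonSolution (extSol σ) ∧ extSol σ ∘ extSol σ = id :=
  extension_is_involutive_solution_general h2 σ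
end

section
/- Let A be an elementary abelian 2-group, X a non-empty set, and σ, ρ: A → Sym(X) two arbitrary functions. Then the solutions Ext_X^σ(A,t_A) and Ext_X^ρ(A,t_A) of the Pentagon Equation are isomorphic; explicitly, after normalizing σ_0 = ρ_0 = id, the map f(x,a) = (ρ_a σ_a⁻¹(x), a) is a bijection satisfying (f × f) ∘ s_σ = s_ρ ∘ (f × f). -/
def extIso {X A : Type*} (σ ρ : A → Equiv.Perm X) : X × A ≃ X × A :=
  Equiv.prodCongrLeft fun a => (σ a).symm.trans (ρ a)

/-- Both sides send `((x, a), (y, b))` to `((ρ_a σ_a⁻¹ x, a), (ρ_{a+b} σ_b⁻¹ y, a + b))`. -/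
theorem prodMap_extIso_comp_extSol {X A : Type*} [AddCommGroup A] (σ ρ : A → Equiv.Perm X) :
    Prod.map (extIso σ ρ) (extIso σ ρ) ∘ extSol σ =
      extSol ρ ∘ Prod.map (extIso σ ρ) (extIso σ ρ) := by
  funext p
  simp [extIso, extSol]

theorem extensions_isomorphic_general {X A : Type*} [AddCommGroup A]
    (σ ρ : A → Equiv.Perm X) :
    (∃ f : X × A → X × A, Function.Bijective f ∧
        Prod.map f f ∘ extSol σ = extSol ρ ∘ Prod.map f f) ∧
    (σ 0 = 1 → ρ 0 = 1 →
      Function.Bijective (fun p : X × A => (ρ p.2 ((σ p.2).symm p.1), p.2)) ∧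
      Prod.map (fun p : X × A => (ρ p.2 ((σ p.2).symm p.1), p.2))
          (fun p : X × A => (ρ p.2 ((σ p.2).symm p.1), p.2)) ∘ extSol σ =
        extSol ρ ∘ Prod.map (fun p : X × A => (ρ p.2 ((σ p.2).symm p.1), p.2))
          (fun p : X × A => (ρ p.2 ((σ p.2).symm p.1), p.2))) :=
  ⟨⟨extIso σ ρ, (extIso σ ρ).bijective, prodMap_extIso_comp_extSol σ ρ⟩,
    fun _ _ => ⟨(extIso σ ρ).bijective, prodMap_extIso_comp_extSol σ ρ⟩⟩

theorem extensions_isomorphic {X A : Type*} [Nonempty X] [AddCommGroup A]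
    (h2 : ∀ a : A, a + a = 0) (σ ρ : A → Equiv.Perm X) :
    (∃ f : X × A → X × A, Function.Bijective f ∧
        Prod.map f f ∘ extSol σ = extSol ρ ∘ Prod.map f f) ∧
    (σ 0 = 1 → ρ 0 = 1 →
      Function.Bijective (fun p : X × A => (ρ p.2 ((σ p.2).symm p.1), p.2)) ∧
      Prod.map (fun p : X × A => (ρ p.2 ((σ p.2).symm p.1), p.2))
          (fun p : X × A => (ρ p.2 ((σ p.2).symm p.1), p.2)) ∘ extSol σ =
        extSol ρ ∘ Prod.map (fun p : X × A => (ρ p.2 ((σ p.2).symm p.1), p.2))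
          (fun p : X × A => (ρ p.2 ((σ p.2).symm p.1), p.2))) :=
  extensions_isomorphic_general σ ρ
end
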